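/- Let q ≥ 3 be a prime power, γ ∈ F_q^* of order t < q−1, β ∈ F_q^*, and α_1,...,α_m ∈ F_q^* pairwise distinct with each α_j ∉ β⟨γ⟩ and 2 ≤ m ≤ q−1−t. For the m-fold multisequence Z with σ_i^(j) = (α_j γ^i − β)^{q-2}, and for integers 1 ≤ k ≤ q−1 and n ≥ 1, N_k^(m)(Z,n) ≥ min( (mn−1)/(m+k), (δ_t m − 1)/k, t ). -/

import Mathlib

/-- `Z` satisfies a recursion of order `c` by a polynomial of degree at most `k`
in each variable, over the first `n` terms of each component sequence. -/
def SatisfiesNLRecursion {Fq : Type*} [Field Fq] {m : ℕ}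
    (Z : Fin m → ℕ → Fq) (k n c : ℕ) : Prop :=
  ∃ f : MvPolynomial (Fin c) Fq,
    (∀ s : Fin c, MvPolynomial.degreeOf s f ≤ k) ∧
    ∀ j : Fin m, ∀ i : ℕ, i + c < n →
      Z j (i + c) = MvPolynomial.eval (fun s : Fin c => Z j (i + s)) f

open scoped Classical in
/-- The `n`th joint nonlinear complexity of order `k` of the `m`-fold
multisequence `Z` over `F_q`. -/
noncomputable def jointNLC {Fq : Type*} [Field Fq] {m : ℕ}
    (Z : Fin m → ℕ → Fq) (k n : ℕ) : ℕ :=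
  if ∀ j : Fin m, ∀ i : ℕ, i < n → Z j i = 0 then 0
  else sInf {c : ℕ | SatisfiesNLRecursion Z k n c}


open scoped Classical in
/-- `‖ξ‖_t = b` if `ξ = γ^b` with `0 ≤ b < t`, and `‖ξ‖_t = t` if `ξ ∉ ⟨γ⟩`. -/
noncomputable def normT {Fq : Type*} [Field Fq] (γ : Fq) (t : ℕ) (ξ : Fq) : ℕ :=
  if ∃ b : ℕ, b < t ∧ ξ = γ ^ b then sInf {b : ℕ | ξ = γ ^ b} else t

/-- `δ_t`: the minimum of `‖α_{j1} α_{j2}⁻¹‖_t` over `j1 ≠ j2`. -/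
noncomputable def deltaT {Fq : Type*} [Field Fq] {m : ℕ}
    (γ : Fq) (t : ℕ) (α : Fin m → Fq) : ℕ :=
  sInf {d : ℕ | ∃ j1 j2 : Fin m, j1 ≠ j2 ∧ d = normT γ t (α j1 * (α j2)⁻¹)}

/-! Off the zero terms, `x ^ (q - 2) = x⁻¹`, so with `ℓ_s = γ ^ s X - β` a recursion of order
`c < t` with polynomial `f` says `1 / ℓ_c(y) = f (1 / ℓ_0(y), …, 1 / ℓ_{c-1}(y))` at every
`y = α_j γ ^ i` with `i + c < n`. Clearing denominators turns this into a root of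
`ℓ_c · ∏ ℓ_s ^ k · f (1 / ℓ) - ∏ ℓ_s ^ k`, a polynomial of degree at most `c k + 1`; it is nonzero
because at the root of `ℓ_c` only the product survives. For `i < min (n - c) δ_t` the points
`α_j γ ^ i` are pairwise distinct by the definition of `δ_t`, so `m · min (n - c) δ_t ≤ c k + 1`,
which rearranges to the bound. -/

open Polynomial

section ClearDenoms

variable {K : Type*} [Field K] {σ : Type*} [Fintype σ]

/-- `∏ s, ℓ s ^ k * f (1 / ℓ)`, which is a polynomial as soon as every `degreeOf s f ≤ k`. -/
noncomputable def clearDenoms (f : MvPolynomial σ K) (ℓ : σ → K[X]) (k : ℕ) : K[X] :=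
  ∑ e ∈ f.support, C (MvPolynomial.coeff e f) * ∏ s, ℓ s ^ (k - e s)

theorem natDegree_prod_pow_le {ℓ : σ → K[X]} (hℓ : ∀ s, (ℓ s).natDegree ≤ 1) {k : ℕ}
    {e : σ → ℕ} (he : ∀ s, e s ≤ k) : (∏ s, ℓ s ^ e s).natDegree ≤ Fintype.card σ * k :=
  calc (∏ s, ℓ s ^ e s).natDegree ≤ ∑ s, (ℓ s ^ e s).natDegree := natDegree_prod_le _ _
    _ ≤ ∑ _s : σ, k := Finset.sum_le_sum fun s _ =>
        natDegree_pow_le.trans (by nlinarith [hℓ s, he s])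
    _ = Fintype.card σ * k := by simp

theorem natDegree_clearDenoms_le (f : MvPolynomial σ K) {ℓ : σ → K[X]}
    (hℓ : ∀ s, (ℓ s).natDegree ≤ 1) (k : ℕ) :
    (clearDenoms f ℓ k).natDegree ≤ Fintype.card σ * k :=
  natDegree_sum_le_of_forall_le _ _ fun e _ => (natDegree_C_mul_le _ _).trans <|
    natDegree_prod_pow_le hℓ fun s => Nat.sub_le k (e s)

theorem eval_clearDenoms {f : MvPolynomial σ K} {k : ℕ}
    (hf : ∀ s, MvPolynomial.degreeOf s f ≤ k) (ℓ : σ → K[X]) {y : K}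
    (hy : ∀ s, (ℓ s).eval y ≠ 0) :
    (clearDenoms f ℓ k).eval y =
      (∏ s, (ℓ s).eval y ^ k) * MvPolynomial.eval (fun s => ((ℓ s).eval y)⁻¹) f := by
  rw [clearDenoms, eval_finsetSum, MvPolynomial.eval_eq', Finset.mul_sum]
  refine Finset.sum_congr rfl fun e he => ?_
  have hek : ∀ s, e s ≤ k := fun s =>
    (Finset.le_sup (f := fun d => d s) he).trans ((MvPolynomial.degreeOf_eq_sup s f) ▸ hf s)
  simp only [eval_mul, eval_C, eval_prod, eval_pow, inv_pow, mul_left_comm _ (f.coeff e),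
    ← Finset.prod_mul_distrib]
  congr 1
  exact Finset.prod_congr rfl fun s _ => pow_sub₀ _ (hy s) (hek s)

theorem mul_sub_prod_pow_ne_zero {ℓ₀ P : K[X]} {ℓ : σ → K[X]} {k : ℕ} {y : K}
    (h₀ : ℓ₀.eval y = 0) (hy : ∀ s, (ℓ s).eval y ≠ 0) : ℓ₀ * P - ∏ s, ℓ s ^ k ≠ 0 := by
  intro h
  have := congrArg (eval y) h
  simp only [eval_sub, eval_mul, h₀, zero_mul, zero_sub, neg_eq_zero, eval_prod, eval_pow,
    eval_zero] at this
  exact Finset.prod_ne_zero_iff.2 (fun s _ => pow_ne_zero k (hy s)) this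

end ClearDenoms

section Distinctness

variable {K : Type*} [Field K]

theorem normT_le (γ : K) (t : ℕ) (ξ : K) : normT γ t ξ ≤ t := by
  classical
  rw [normT]
  split_ifs with h
  · obtain ⟨b, hb, hξ⟩ := h
    exact (Nat.sInf_le hξ).trans hb.le
  · exact le_rfl

theorem normT_le_of_eq_pow {γ : K} {t b : ℕ} {ξ : K} (hb : b < t) (hξ : ξ = γ ^ b) :
    normT γ t ξ ≤ b := by
  classical
  rw [normT, if_pos ⟨b, hb, hξ⟩]
  exact Nat.sInf_le hξ

variable {m : ℕ} (γ : K) (t : ℕ) (α : Fin m → K)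

theorem deltaT_le_normT {j₁ j₂ : Fin m} (h : j₁ ≠ j₂) :
    deltaT γ t α ≤ normT γ t (α j₁ * (α j₂)⁻¹) :=
  Nat.sInf_le ⟨j₁, j₂, h, rfl⟩

-- For `m < 2` the defining set is empty and `sInf ∅ = 0`.
theorem deltaT_le : deltaT γ t α ≤ t := by
  rcases Set.eq_empty_or_nonempty
      {d : ℕ | ∃ j₁ j₂ : Fin m, j₁ ≠ j₂ ∧ d = normT γ t (α j₁ * (α j₂)⁻¹)} with
    h | ⟨_, j₁, j₂, h, rfl⟩
  · rw [deltaT, h, Nat.sInf_empty]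
    exact Nat.zero_le t
  · exact (deltaT_le_normT γ t α h).trans (normT_le γ t _)

variable {γ α}

theorem eq_and_eq_zero_of_eq_mul_pow (hα₀ : ∀ j, α j ≠ 0)
    {j₁ j₂ : Fin m} {b : ℕ} (hb : b < deltaT γ (orderOf γ) α) (h : α j₁ = α j₂ * γ ^ b) :
    j₁ = j₂ ∧ b = 0 := by
  have hbγ : b < orderOf γ := hb.trans_le (deltaT_le γ _ α)
  obtain rfl : j₁ = j₂ := by
    by_contra hne
    have := normT_le_of_eq_pow (ξ := α j₁ * (α j₂)⁻¹) hbγ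
      (by rw [h, mul_comm, inv_mul_cancel_left₀ (hα₀ j₂)])
    have := deltaT_le_normT γ (orderOf γ) α hne
    omega
  have hγb : γ ^ b = γ ^ 0 := by
    rw [pow_zero]
    exact mul_left_cancel₀ (hα₀ j₁) (by rw [mul_one, ← h])
  exact ⟨rfl, pow_injOn_Iio_orderOf hbγ (Nat.zero_lt_of_lt hbγ) hγb⟩

theorem injective_mul_pow_of_le_deltaT (hγ : γ ≠ 0) (hα₀ : ∀ j, α j ≠ 0) {L : ℕ}
    (hL : L ≤ deltaT γ (orderOf γ) α) :
    Function.Injective fun p : Fin m × Fin L => α p.1 * γ ^ (p.2 : ℕ) := by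
  intro p p' h
  wlog hle : (p.2 : ℕ) ≤ p'.2 generalizing p p'
  · exact (this h.symm (by omega)).symm
  have h' : α p.1 = α p'.1 * γ ^ ((p'.2 : ℕ) - p.2) := by
    refine mul_right_cancel₀ (pow_ne_zero (p.2 : ℕ) hγ) ?_
    rw [show α p.1 * γ ^ (p.2 : ℕ) = α p'.1 * γ ^ (p'.2 : ℕ) from h, mul_assoc, ← pow_add,
      Nat.sub_add_cancel hle]
  obtain ⟨h₁, h₂⟩ := eq_and_eq_zero_of_eq_mul_pow hα₀ (by omega) h'
  exact Prod.ext h₁ (Fin.ext (by omega))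

end Distinctness

section Core

variable {K : Type*} [Field K]

theorem mul_pow_sub_ne_zero {γ a b : K} (hγ : 0 < orderOf γ) (h : ∀ i : ℕ, a ≠ b * γ ^ i)
    (i : ℕ) : a * γ ^ i - b ≠ 0 := by
  intro hab
  have hγi : γ ^ i * γ ^ (i * (orderOf γ - 1)) = 1 := by
    rw [← pow_add, add_comm, ← Nat.mul_succ, Nat.succ_eq_add_one, Nat.sub_add_cancel hγ,
      pow_mul', pow_orderOf_eq_one, one_pow]
  refine h (i * (orderOf γ - 1)) ?_
  rw [← sub_eq_zero.1 hab, mul_assoc, hγi, mul_one]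

theorem mul_min_le_of_satisfiesNLRecursion {m : ℕ} {γ β : K} {α : Fin m → K}
    (hα₀ : ∀ j, α j ≠ 0) (hβ : β ≠ 0) (hcoset : ∀ j : Fin m, ∀ i : ℕ, α j ≠ β * γ ^ i)
    {k n c : ℕ} (hc : c < orderOf γ)
    (hrec : SatisfiesNLRecursion (fun j i => (α j * γ ^ i - β)⁻¹) k n c) :
    m * min (n - c) (deltaT γ (orderOf γ) α) ≤ c * k + 1 := by
  obtain ⟨f, hf, hrec⟩ := hrec
  have hγ : γ ≠ 0 := by rintro rfl; simp at hc
  set ℓ : ℕ → K[X] := fun s => C (γ ^ s) * X - C β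
  have hℓ : ∀ s, (ℓ s).natDegree ≤ 1 := fun s => by
    simp only [ℓ, sub_eq_add_neg, ← C_neg]
    exact natDegree_linear_le
  have hℓeval : ∀ s y, (ℓ s).eval y = γ ^ s * y - β := fun s y => by simp [ℓ]
  set G := ℓ c * clearDenoms f (fun s : Fin c => ℓ s) k - ∏ s : Fin c, ℓ s ^ k
  have hGdeg : G.natDegree ≤ c * k + 1 := by
    refine (natDegree_sub_le _ _).trans (max_le ?_ ?_)
    · refine natDegree_mul_le.trans ?_
      have := natDegree_clearDenoms_le f (fun s : Fin c => hℓ s) k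
      simp only [Fintype.card_fin] at this
      linarith [hℓ c]
    · simpa using (natDegree_prod_pow_le (fun s : Fin c => hℓ s) fun _ => le_refl k).trans
        (Nat.le_succ _)
  have hG : G ≠ 0 := by
    refine mul_sub_prod_pow_ne_zero (y := β / γ ^ c) ?_ fun s => ?_
    · rw [hℓeval, mul_div_cancel₀ _ (pow_ne_zero c hγ), sub_self]
    · rw [hℓeval, sub_ne_zero]
      intro h
      field_simp at h
      exact absurd (pow_injOn_Iio_orderOf (s.2.trans hc) hc h) (ne_of_lt s.2)
  have hroot : ∀ p : Fin m × Fin (min (n - c) (deltaT γ (orderOf γ) α)),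
      G.eval (α p.1 * γ ^ (p.2 : ℕ)) = 0 := by
    rintro ⟨j, i, hi⟩
    set y := α j * γ ^ i
    have hshift : ∀ s, α j * γ ^ (i + s) - β = (ℓ s).eval y := fun s => by
      rw [hℓeval, pow_add]; ring
    have hy : ∀ s, (ℓ s).eval y ≠ 0 := fun s =>
      hshift s ▸ mul_pow_sub_ne_zero (hc.trans_le' (Nat.zero_le c)) (hcoset j) (i + s)
    have hZ := hrec j i (by omega)
    simp only [hshift] at hZ
    simp only [G, eval_sub, eval_mul, eval_prod, eval_pow,
      eval_clearDenoms hf (fun s : Fin c => ℓ s) fun s => hy s, ← hZ]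
    rw [mul_left_comm, mul_inv_cancel₀ (hy c), mul_one, sub_self]
  by_contra! hlt
  exact hG (eq_zero_of_natDegree_lt_card_of_eval_eq_zero G
    (injective_mul_pow_of_le_deltaT hγ hα₀ (min_le_right _ _)) hroot
    (by simpa using hGdeg.trans_lt hlt))

end Core

-- The zero multisequence satisfies every recursion, so the junk value `0` is no exception.
theorem satisfiesNLRecursion_jointNLC {K : Type*} [Field K] {m : ℕ} (Z : Fin m → ℕ → K)
    (k n : ℕ) : SatisfiesNLRecursion Z k n (jointNLC Z k n) := by
  unfold jointNLC
  split_ifs with h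
  · exact ⟨0, fun s => by simp, fun j i hi => by simpa using h j i (by omega)⟩
  · exact Nat.sInf_mem (s := {c | SatisfiesNLRecursion Z k n c})
      ⟨n, 0, fun s => by simp, fun j i hi => by omega⟩

theorem FiniteField.pow_card_sub_two_eq_inv {K : Type*} [Field K] [Fintype K] {a : K}
    (ha : a ≠ 0) : a ^ (Fintype.card K - 2) = a⁻¹ := by
  refine eq_inv_of_mul_eq_one_left ?_
  have := Fintype.one_lt_card (α := K)
  rw [← pow_succ, show Fintype.card K - 2 + 1 = Fintype.card K - 1 by omega]
  exact FiniteField.pow_card_sub_one_eq_one a ha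

theorem min_div_le_of_mul_min_le {m n N k δ : ℕ} (h : m * min (n - N) δ ≤ N * k + 1) :
    min (((m : ℝ) * n - 1) / (m + k)) (((δ : ℝ) * m - 1) / k) ≤ N := by
  rcases le_total (n - N) δ with hδ | hδ
  · rw [min_eq_left hδ] at h
    have hn : m * n ≤ m * (n - N) + m * N := by
      rw [← mul_add]; exact Nat.mul_le_mul_left m (by omega)
    have : ((m * n : ℕ) : ℝ) ≤ N * k + 1 + m * N := by exact_mod_cast hn.trans (by omega)
    refine min_le_of_left_le (div_le_of_le_mul₀ (by positivity) (by positivity) ?_)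
    push_cast at this
    linarith
  · rw [min_eq_right hδ] at h
    have : ((m * δ : ℕ) : ℝ) ≤ N * k + 1 := by exact_mod_cast h
    refine min_le_of_right_le (div_le_of_le_mul₀ (by positivity) (by positivity) ?_)
    push_cast at this
    linarith

theorem jointNLC_inversive_period_t_lower_bound_coset_general
    {Fq : Type*} [Field Fq] [Fintype Fq] (q : ℕ) (hq : q = Fintype.card Fq)
    {m : ℕ}
    (γ : Fq) (t : ℕ) (hγt : orderOf γ = t)
    (α : Fin m → Fq) (hα0 : ∀ j, α j ≠ 0)
    (β : Fq) (hβ : β ≠ 0)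
    (hcoset : ∀ j : Fin m, ∀ i : ℕ, α j ≠ β * γ ^ i)
    (k n : ℕ) :
    (jointNLC (fun (j : Fin m) (i : ℕ) => (α j * γ ^ i - β) ^ (q - 2)) k n : ℝ)
      ≥ min (min (((m : ℝ) * n - 1) / ((m : ℝ) + k))
              (((deltaT γ t α : ℝ) * m - 1) / (k : ℝ)))
          (t : ℝ) := by
  subst hq hγt
  rcases le_or_gt (orderOf γ)
    (jointNLC (fun j i => (α j * γ ^ i - β) ^ (Fintype.card Fq - 2)) k n) with hN | hN
  · exact min_le_of_right_le (by exact_mod_cast hN)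
  have hZ : (fun j i => (α j * γ ^ i - β) ^ (Fintype.card Fq - 2)) =
      fun j i => (α j * γ ^ i - β)⁻¹ := funext₂ fun j i =>
    FiniteField.pow_card_sub_two_eq_inv (mul_pow_sub_ne_zero (Nat.zero_lt_of_lt hN) (hcoset j) i)
  rw [hZ] at hN ⊢
  exact min_le_of_left_le <| min_div_le_of_mul_min_le <|
    mul_min_le_of_satisfiesNLRecursion hα0 hβ hcoset hN (satisfiesNLRecursion_jointNLC _ k n)

/-- Corollary: if moreover `t < q−1`, each `α_j ∉ β⟨γ⟩`, and
`2 ≤ m ≤ q−1−t`, then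
`N_k^(m)(Z,n) ≥ min( (mn−1)/(m+k), (δ_t m − 1)/k, t )`. -/
theorem jointNLC_inversive_period_t_lower_bound_coset
    {Fq : Type*} [Field Fq] [Fintype Fq] (q : ℕ) (hq : q = Fintype.card Fq)
    (hq3 : 3 ≤ q) {m : ℕ} (hm2 : 2 ≤ m)
    (γ : Fq) (t : ℕ) (hγt : orderOf γ = t) (hγ0 : γ ≠ 0) (htq : t < q - 1)
    (hmq : m ≤ q - 1 - t)
    (α : Fin m → Fq) (hα0 : ∀ j, α j ≠ 0) (hαinj : Function.Injective α)
    (β : Fq) (hβ : β ≠ 0)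
    (hcoset : ∀ j : Fin m, ∀ i : ℕ, α j ≠ β * γ ^ i)
    (k n : ℕ) (hk1 : 1 ≤ k) (hkq : k ≤ q - 1) (hn : 1 ≤ n) :
    (jointNLC (fun (j : Fin m) (i : ℕ) => (α j * γ ^ i - β) ^ (q - 2)) k n : ℝ)
      ≥ min (min (((m : ℝ) * n - 1) / ((m : ℝ) + k))
              (((deltaT γ t α : ℝ) * m - 1) / (k : ℝ)))
          (t : ℝ) :=
  jointNLC_inversive_period_t_lower_bound_coset_general q hq γ t hγt α hα0 β hβ hcoset k n
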